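/- Consider the chain complex 0 → ℤ →^{Φ_2} ℤ^2 →^{Φ_1} ℤ^9 → 0 (the Bredon chain complex of p3), where Φ_2 = 0 and Φ_1 is given on the basis β_0, β_1 of ℤ^2 by Φ_1(β_0) = α_0^2 − α_0^3 = e_2 − e_3 and Φ_1(β_1) = e_7 + e_8 + e_9 − e_4 − e_5 − e_6. Then H_2 ≅ ℤ, H_1 = 0, and H_0 ≅ ℤ^7. -/

import Mathlib

open LinearMap Submodule

noncomputable def Phi2 : ℤ →ₗ[ℤ] (Fin 2 → ℤ) := 0

noncomputable def Phi1 : (Fin 2 → ℤ) →ₗ[ℤ] (Fin 9 → ℤ) :=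
  Matrix.toLin' !![0, 0; 1, 0; -1, 0; 0, -1; 0, -1; 0, -1; 0, 1; 0, 1; 0, 1]

abbrev H1 : Type := ↥(ker Phi1) ⧸ (Submodule.comap (ker Phi1).subtype (range Phi2))

abbrev H0 : Type := (Fin 9 → ℤ) ⧸ (range Phi1)

@[simp] lemma sfin_2_1 : Fin.succ (1 : Fin 2) = (2 : Fin 3) := rfl
@[simp] lemma sfin_3_1 : Fin.succ (1 : Fin 3) = (2 : Fin 4) := rfl
@[simp] lemma sfin_3_2 : Fin.succ (2 : Fin 3) = (3 : Fin 4) := rfl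
@[simp] lemma sfin_4_1 : Fin.succ (1 : Fin 4) = (2 : Fin 5) := rfl
@[simp] lemma sfin_4_2 : Fin.succ (2 : Fin 4) = (3 : Fin 5) := rfl
@[simp] lemma sfin_4_3 : Fin.succ (3 : Fin 4) = (4 : Fin 5) := rfl
@[simp] lemma sfin_5_1 : Fin.succ (1 : Fin 5) = (2 : Fin 6) := rfl
@[simp] lemma sfin_5_2 : Fin.succ (2 : Fin 5) = (3 : Fin 6) := rfl
@[simp] lemma sfin_5_3 : Fin.succ (3 : Fin 5) = (4 : Fin 6) := rfl
@[simp] lemma sfin_5_4 : Fin.succ (4 : Fin 5) = (5 : Fin 6) := rfl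
@[simp] lemma sfin_6_1 : Fin.succ (1 : Fin 6) = (2 : Fin 7) := rfl
@[simp] lemma sfin_6_2 : Fin.succ (2 : Fin 6) = (3 : Fin 7) := rfl
@[simp] lemma sfin_6_3 : Fin.succ (3 : Fin 6) = (4 : Fin 7) := rfl
@[simp] lemma sfin_6_4 : Fin.succ (4 : Fin 6) = (5 : Fin 7) := rfl
@[simp] lemma sfin_6_5 : Fin.succ (5 : Fin 6) = (6 : Fin 7) := rfl
@[simp] lemma sfin_7_1 : Fin.succ (1 : Fin 7) = (2 : Fin 8) := rfl
@[simp] lemma sfin_7_2 : Fin.succ (2 : Fin 7) = (3 : Fin 8) := rfl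
@[simp] lemma sfin_7_3 : Fin.succ (3 : Fin 7) = (4 : Fin 8) := rfl
@[simp] lemma sfin_7_4 : Fin.succ (4 : Fin 7) = (5 : Fin 8) := rfl
@[simp] lemma sfin_7_5 : Fin.succ (5 : Fin 7) = (6 : Fin 8) := rfl
@[simp] lemma sfin_7_6 : Fin.succ (6 : Fin 7) = (7 : Fin 8) := rfl
@[simp] lemma sfin_8_1 : Fin.succ (1 : Fin 8) = (2 : Fin 9) := rfl
@[simp] lemma sfin_8_2 : Fin.succ (2 : Fin 8) = (3 : Fin 9) := rfl
@[simp] lemma sfin_8_3 : Fin.succ (3 : Fin 8) = (4 : Fin 9) := rfl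
@[simp] lemma sfin_8_4 : Fin.succ (4 : Fin 8) = (5 : Fin 9) := rfl
@[simp] lemma sfin_8_5 : Fin.succ (5 : Fin 8) = (6 : Fin 9) := rfl
@[simp] lemma sfin_8_6 : Fin.succ (6 : Fin 8) = (7 : Fin 9) := rfl
@[simp] lemma sfin_8_7 : Fin.succ (7 : Fin 8) = (8 : Fin 9) := rfl
@[simp] lemma cfin_5_4 {α : Type*} (x : α) (u : Fin 4 → α) : Matrix.vecCons x u (4 : Fin 5) = u 3 := rfl
@[simp] lemma cfin_6_4 {α : Type*} (x : α) (u : Fin 5 → α) : Matrix.vecCons x u (4 : Fin 6) = u 3 := rfl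
@[simp] lemma cfin_6_5 {α : Type*} (x : α) (u : Fin 5 → α) : Matrix.vecCons x u (5 : Fin 6) = u 4 := rfl
@[simp] lemma cfin_7_4 {α : Type*} (x : α) (u : Fin 6 → α) : Matrix.vecCons x u (4 : Fin 7) = u 3 := rfl
@[simp] lemma cfin_7_5 {α : Type*} (x : α) (u : Fin 6 → α) : Matrix.vecCons x u (5 : Fin 7) = u 4 := rfl
@[simp] lemma cfin_7_6 {α : Type*} (x : α) (u : Fin 6 → α) : Matrix.vecCons x u (6 : Fin 7) = u 5 := rfl
@[simp] lemma cfin_8_4 {α : Type*} (x : α) (u : Fin 7 → α) : Matrix.vecCons x u (4 : Fin 8) = u 3 := rfl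
@[simp] lemma cfin_8_5 {α : Type*} (x : α) (u : Fin 7 → α) : Matrix.vecCons x u (5 : Fin 8) = u 4 := rfl
@[simp] lemma cfin_8_6 {α : Type*} (x : α) (u : Fin 7 → α) : Matrix.vecCons x u (6 : Fin 8) = u 5 := rfl
@[simp] lemma cfin_8_7 {α : Type*} (x : α) (u : Fin 7 → α) : Matrix.vecCons x u (7 : Fin 8) = u 6 := rfl
@[simp] lemma cfin_9_4 {α : Type*} (x : α) (u : Fin 8 → α) : Matrix.vecCons x u (4 : Fin 9) = u 3 := rfl
@[simp] lemma cfin_9_5 {α : Type*} (x : α) (u : Fin 8 → α) : Matrix.vecCons x u (5 : Fin 9) = u 4 := rfl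
@[simp] lemma cfin_9_6 {α : Type*} (x : α) (u : Fin 8 → α) : Matrix.vecCons x u (6 : Fin 9) = u 5 := rfl
@[simp] lemma cfin_9_7 {α : Type*} (x : α) (u : Fin 8 → α) : Matrix.vecCons x u (7 : Fin 9) = u 6 := rfl
@[simp] lemma cfin_9_8 {α : Type*} (x : α) (u : Fin 8 → α) : Matrix.vecCons x u (8 : Fin 9) = u 7 := rfl

noncomputable def piMap : (Fin 9 → ℤ) →ₗ[ℤ] (Fin 7 → ℤ) :=
  Matrix.toLin' !![1, 0, 0, 0, 0, 0, 0, 0, 0;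
                   0, 1, 1, 0, 0, 0, 0, 0, 0;
                   0, 0, 0, 1, 0, 0, 1, 0, 0;
                   0, 0, 0, 0, 1, 0, 1, 0, 0;
                   0, 0, 0, 0, 0, 1, 1, 0, 0;
                   0, 0, 0, 0, 0, 0, -1, 1, 0;
                   0, 0, 0, 0, 0, 0, -1, 0, 1]

lemma Phi1_apply (c : Fin 2 → ℤ) :
    Phi1 c = ![0, c 0, -(c 0), -(c 1), -(c 1), -(c 1), c 1, c 1, c 1] := by
  simp [Phi1, Matrix.toLin'_apply, Matrix.mulVec, Matrix.cons_dotProduct, dotProduct, Matrix.vecHead, Matrix.vecTail]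

lemma piMap_apply (x : Fin 9 → ℤ) :
    piMap x = ![x 0, x 1 + x 2, x 3 + x 6, x 4 + x 6, x 5 + x 6, x 7 - x 6, x 8 - x 6] := by
  funext i
  fin_cases i <;>
    simp [_root_.piMap, Matrix.toLin'_apply, Matrix.mulVec, Matrix.cons_dotProduct,
      dotProduct, Fin.sum_univ_succ] <;>
    try ring

lemma piMap_surj : Function.Surjective piMap := by
  intro y
  refine ⟨![y 0, y 1, 0, y 2, y 3, y 4, 0, y 5, y 6], ?_⟩
  rw [piMap_apply]
  funext i
  fin_cases i <;> simp

lemma ker_Phi1 : ker Phi1 = ⊥ := by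
  rw [ker_eq_bot']
  intro m hm
  rw [Phi1_apply] at hm
  have h1 := congrFun hm 1
  have h6 := congrFun hm 6
  simp at h1 h6
  funext i
  fin_cases i <;> simp [h1, h6]

lemma range_eq_ker : range Phi1 = ker piMap := by
  apply le_antisymm
  · rintro _ ⟨c, rfl⟩
    rw [mem_ker, Phi1_apply, piMap_apply]
    funext i
    fin_cases i <;> simp <;> try ring
  · intro x hx
    rw [mem_ker, piMap_apply] at hx
    have h0 := congrFun hx 0
    have h1 := congrFun hx 1
    have h2 := congrFun hx 2
    have h3 := congrFun hx 3
    have h4 := congrFun hx 4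
    have h5 := congrFun hx 5
    have h6 := congrFun hx 6
    simp at h0 h1 h2 h3 h4 h5 h6
    refine ⟨![x 1, x 6], ?_⟩
    rw [Phi1_apply]
    funext i
    fin_cases i <;> simp <;> omega

theorem stmt_15 :
    Nonempty (↥(ker Phi2) ≃ₗ[ℤ] ℤ) ∧
    Subsingleton H1 ∧
    Nonempty (H0 ≃ₗ[ℤ] (Fin 7 → ℤ)) := by
  refine ⟨⟨?_⟩, ?_, ⟨?_⟩⟩
  · have h : ker Phi2 = ⊤ := by simp [Phi2]
    exact (LinearEquiv.ofEq _ _ h).trans Submodule.topEquiv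
  · have : Subsingleton ↥(ker Phi1) := by
      rw [ker_Phi1]; infer_instance
    exact (Submodule.Quotient.mk_surjective _).subsingleton
  · exact (Submodule.quotEquivOfEq _ _ range_eq_ker).trans
      (piMap.quotKerEquivOfSurjective piMap_surj)
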